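/- Product rule for scale-invariant Hölder spaces: Let 0 < α ≤ 1 and let D ⊆ ℝ² with 0 ∈ D. There is a constant C > 0, depending only on α, such that for all f : D → ℝ with f(0) = 0 and ‖f‖_{C^α(D)} < ∞ and all h : D → ℝ with ‖h‖_{∘C^α(D)} < ∞, one has ‖f·h‖_{C^α(D)} ≤ C ‖h‖_{∘C^α(D)} ‖f‖_{C^α(D)}. -/

import Mathlib

/-! Write `F = ‖f‖_{C^α}` and `H = ‖h‖_{∘C^α}`. Since `f(0) = 0`, `|f x| ≤ F |x|^α`, and in
`f x h x - f y h y = f x (h x - h y) + (f x - f y) h y` this weight turns `|x|^α |h x - h y|` into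
a difference quotient of `|·|^α h`, up to `||x|^α - |y|^α| ≤ |x - y|^α` (concavity of `t ↦ t^α`).
Hence `|f h|` is bounded by `H F` and its Hölder quotients by `3 H F`, giving `C = 4`. -/

open Set
open scoped ENNReal NNReal

noncomputable section

/-- The plane `ℝ²` with the Euclidean norm. -/
abbrev R2 := EuclideanSpace ℝ (Fin 2)

/-- The scale-invariant Hölder norm `‖f‖_{∘C^α(D)}` (with value in `ℝ≥0∞`):
`sup_D |f| + sup_{x ≠ x'} | |x|^α f(x) - |x'|^α f(x') | / |x - x'|^α`. -/
def ringNorm (α : ℝ) (D : Set R2) (f : R2 → ℝ) : ℝ≥0∞ :=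
  (⨆ x : D, (‖f (x : R2)‖₊ : ℝ≥0∞)) +
    ⨆ p : {q : D × D // (q.1 : R2) ≠ (q.2 : R2)},
      (‖(‖(p.1.1 : R2)‖ ^ α) * f (p.1.1 : R2) - (‖(p.1.2 : R2)‖ ^ α) * f (p.1.2 : R2)‖₊ : ℝ≥0∞) /
        ENNReal.ofReal (‖(p.1.1 : R2) - (p.1.2 : R2)‖ ^ α)

/-- The uniform Hölder norm `‖f‖_{C^α(D)}` (with value in `ℝ≥0∞`):
`sup_D |f| + sup_{x ≠ y} |f(x) - f(y)| / |x - y|^α`. -/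
def unifNorm (α : ℝ) (D : Set R2) (f : R2 → ℝ) : ℝ≥0∞ :=
  (⨆ x : D, (‖f (x : R2)‖₊ : ℝ≥0∞)) +
    ⨆ p : {q : D × D // (q.1 : R2) ≠ (q.2 : R2)},
      (‖f (p.1.1 : R2) - f (p.1.2 : R2)‖₊ : ℝ≥0∞) /
        ENNReal.ofReal (‖(p.1.1 : R2) - (p.1.2 : R2)‖ ^ α)

def supNorm {E : Type*} (D : Set E) (g : E → ℝ) : ℝ≥0∞ :=
  ⨆ x : D, (‖g (x : E)‖₊ : ℝ≥0∞)

def holderSeminorm {E : Type*} [Norm E] [Sub E] (α : ℝ) (D : Set E) (g : E → ℝ) : ℝ≥0∞ :=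
  ⨆ p : {q : D × D // (q.1 : E) ≠ (q.2 : E)},
    (‖g (p.1.1 : E) - g (p.1.2 : E)‖₊ : ℝ≥0∞) / ENNReal.ofReal (‖(p.1.1 : E) - (p.1.2 : E)‖ ^ α)

theorem unifNorm_eq (α : ℝ) (D : Set R2) (g : R2 → ℝ) :
    unifNorm α D g = supNorm D g + holderSeminorm α D g :=
  rfl

theorem ringNorm_eq (α : ℝ) (D : Set R2) (g : R2 → ℝ) :
    ringNorm α D g = supNorm D g + holderSeminorm α D (fun x => ‖x‖ ^ α * g x) :=
  rfl

section Seminorms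

variable {E : Type*} {α A : ℝ} {D : Set E} {g : E → ℝ}

theorem supNorm_le_ofReal_iff (hA : 0 ≤ A) :
    supNorm D g ≤ ENNReal.ofReal A ↔ ∀ x ∈ D, |g x| ≤ A := by
  simp only [supNorm, iSup_le_iff, Subtype.forall, ← enorm_eq_nnnorm, ← ofReal_norm,
    ENNReal.ofReal_le_ofReal_iff hA, Real.norm_eq_abs]

variable [NormedAddCommGroup E]

theorem holderSeminorm_le_ofReal_iff (hA : 0 ≤ A) :
    holderSeminorm α D g ≤ ENNReal.ofReal A ↔
      ∀ x ∈ D, ∀ y ∈ D, x ≠ y → |g x - g y| ≤ A * ‖x - y‖ ^ α := by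
  have quotient_le_iff : ∀ x y : E, x ≠ y →
      ((‖g x - g y‖₊ : ℝ≥0∞) / ENNReal.ofReal (‖x - y‖ ^ α) ≤ ENNReal.ofReal A ↔
        |g x - g y| ≤ A * ‖x - y‖ ^ α) := fun x y hxy => by
    have hd : 0 < ‖x - y‖ ^ α := Real.rpow_pos_of_pos (norm_sub_pos_iff.2 hxy) α
    rw [ENNReal.div_le_iff (by simpa using hd) ENNReal.ofReal_ne_top, ← enorm_eq_nnnorm,
      ← ofReal_norm, ← ENNReal.ofReal_mul hA, ENNReal.ofReal_le_ofReal_iff (by positivity),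
      Real.norm_eq_abs]
  simp only [holderSeminorm, iSup_le_iff, Subtype.forall, Prod.forall]
  exact forall₂_congr fun x hx => forall₂_congr fun y hy => forall_congr' (quotient_le_iff x y)

theorem abs_le_mul_rpow_norm_of_map_zero (hA : 0 ≤ A) (hD : 0 ∈ D) (hg0 : g 0 = 0)
    (hg : ∀ x ∈ D, ∀ y ∈ D, x ≠ y → |g x - g y| ≤ A * ‖x - y‖ ^ α) {x : E} (hx : x ∈ D) :
    |g x| ≤ A * ‖x‖ ^ α := by
  rcases eq_or_ne x 0 with rfl | hx0
  · rw [hg0, abs_zero]; positivity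
  · simpa [hg0] using hg x hx 0 hD hx0

end Seminorms

section Norms

variable {α A B : ℝ} {D : Set R2} {g : R2 → ℝ}

theorem bounds_of_unifNorm_le (hA : 0 ≤ A) (hg : unifNorm α D g ≤ ENNReal.ofReal A) :
    (∀ x ∈ D, |g x| ≤ A) ∧ ∀ x ∈ D, ∀ y ∈ D, x ≠ y → |g x - g y| ≤ A * ‖x - y‖ ^ α :=
  ⟨(supNorm_le_ofReal_iff hA).1 (le_self_add.trans hg),
    (holderSeminorm_le_ofReal_iff hA).1 (le_add_self.trans hg)⟩

theorem bounds_of_ringNorm_le (hA : 0 ≤ A) (hg : ringNorm α D g ≤ ENNReal.ofReal A) :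
    (∀ x ∈ D, |g x| ≤ A) ∧
      ∀ x ∈ D, ∀ y ∈ D, x ≠ y → |‖x‖ ^ α * g x - ‖y‖ ^ α * g y| ≤ A * ‖x - y‖ ^ α :=
  ⟨(supNorm_le_ofReal_iff hA).1 (le_self_add.trans hg),
    (holderSeminorm_le_ofReal_iff hA).1 (le_add_self.trans hg)⟩

theorem unifNorm_le_ofReal_add (hA : 0 ≤ A) (hB : 0 ≤ B) (hbdd : ∀ x ∈ D, |g x| ≤ A)
    (hholder : ∀ x ∈ D, ∀ y ∈ D, x ≠ y → |g x - g y| ≤ B * ‖x - y‖ ^ α) :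
    unifNorm α D g ≤ ENNReal.ofReal (A + B) := by
  rw [unifNorm_eq, ENNReal.ofReal_add hA hB]
  exact add_le_add ((supNorm_le_ofReal_iff hA).2 hbdd)
    ((holderSeminorm_le_ofReal_iff hB).2 hholder)

end Norms

theorem Real.abs_rpow_sub_rpow_le {a b α : ℝ} (ha : 0 ≤ a) (hb : 0 ≤ b) (hα0 : 0 ≤ α)
    (hα1 : α ≤ 1) : |a ^ α - b ^ α| ≤ |a - b| ^ α := by
  wlog hba : b ≤ a generalizing a b
  · rw [abs_sub_comm, abs_sub_comm a]
    exact this hb ha (le_of_not_ge hba)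
  have subadd := Real.rpow_add_le_add_rpow (sub_nonneg.2 hba) hb hα0 hα1
  rw [sub_add_cancel] at subadd
  rw [abs_of_nonneg (sub_nonneg.2 (Real.rpow_le_rpow hb hba hα0)),
    abs_of_nonneg (sub_nonneg.2 hba)]
  linarith

section Pointwise

variable {E : Type*} [SeminormedAddCommGroup E] {α F H : ℝ} {x y : E} {f h : E → ℝ}

theorem abs_rpow_norm_sub_rpow_norm_le (hα0 : 0 ≤ α) (hα1 : α ≤ 1) (x y : E) :
    |‖x‖ ^ α - ‖y‖ ^ α| ≤ ‖x - y‖ ^ α :=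
  (Real.abs_rpow_sub_rpow_le (norm_nonneg x) (norm_nonneg y) hα0 hα1).trans
    (Real.rpow_le_rpow (abs_nonneg _) (abs_norm_sub_norm_le x y) hα0)

/-- Moving the weight from `h y` to `h x` costs `||x|^α - |y|^α| |h y| ≤ H |x - y|^α`. -/
theorem rpow_norm_mul_abs_sub_le (hα0 : 0 ≤ α) (hα1 : α ≤ 1) (hy : |h y| ≤ H)
    (hring : |‖x‖ ^ α * h x - ‖y‖ ^ α * h y| ≤ H * ‖x - y‖ ^ α) :
    ‖x‖ ^ α * |h x - h y| ≤ 2 * H * ‖x - y‖ ^ α := by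
  have hweight : |(‖y‖ ^ α - ‖x‖ ^ α) * h y| ≤ ‖x - y‖ ^ α * H := by
    rw [abs_mul, abs_sub_comm]
    exact mul_le_mul (abs_rpow_norm_sub_rpow_norm_le hα0 hα1 x y) hy (abs_nonneg _)
      (by positivity)
  calc ‖x‖ ^ α * |h x - h y| = |‖x‖ ^ α * (h x - h y)| := by
        rw [abs_mul, abs_of_nonneg (by positivity : (0 : ℝ) ≤ ‖x‖ ^ α)]
    _ = |(‖x‖ ^ α * h x - ‖y‖ ^ α * h y) + (‖y‖ ^ α - ‖x‖ ^ α) * h y| := by ring_nf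
    _ ≤ H * ‖x - y‖ ^ α + ‖x - y‖ ^ α * H := (abs_add_le _ _).trans (add_le_add hring hweight)
    _ = 2 * H * ‖x - y‖ ^ α := by ring

/-- Splitting `f x h x - f y h y = f x (h x - h y) + (f x - f y) h y`, the vanishing of `f` at
the origin supplies the weight `|x|^α` that the first term needs. -/
theorem abs_mul_sub_mul_le (hF : 0 ≤ F) (hfx : |f x| ≤ F * ‖x‖ ^ α)
    (hf : |f x - f y| ≤ F * ‖x - y‖ ^ α) (hy : |h y| ≤ H)
    (hweighted : ‖x‖ ^ α * |h x - h y| ≤ 2 * H * ‖x - y‖ ^ α) :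
    |f x * h x - f y * h y| ≤ 3 * H * F * ‖x - y‖ ^ α := by
  calc |f x * h x - f y * h y| = |f x * (h x - h y) + (f x - f y) * h y| := by ring_nf
    _ ≤ |f x| * |h x - h y| + |f x - f y| * |h y| := by
        rw [← abs_mul, ← abs_mul]; exact abs_add_le _ _
    _ ≤ F * ‖x‖ ^ α * |h x - h y| + F * ‖x - y‖ ^ α * H := by gcongr
    _ ≤ F * (2 * H * ‖x - y‖ ^ α) + F * ‖x - y‖ ^ α * H := by rw [mul_assoc]; gcongr
    _ = 3 * H * F * ‖x - y‖ ^ α := by ring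

end Pointwise

theorem ring_holder_product_rule (α : ℝ) (hα0 : 0 < α) (hα1 : α ≤ 1) :
    ∃ C : ℝ, 0 < C ∧
      ∀ (D : Set R2), (0 : R2) ∈ D →
      ∀ f h : R2 → ℝ, f 0 = 0 →
      unifNorm α D f < ⊤ → ringNorm α D h < ⊤ →
      unifNorm α D (fun x => f x * h x) ≤
        ENNReal.ofReal C * ringNorm α D h * unifNorm α D f := by
  refine ⟨4, four_pos, fun D hD f h hf0 hf hh => ?_⟩
  set F := (unifNorm α D f).toReal
  set H := (ringNorm α D h).toReal
  have hF : unifNorm α D f = ENNReal.ofReal F := (ENNReal.ofReal_toReal hf.ne).symm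
  have hH : ringNorm α D h = ENNReal.ofReal H := (ENNReal.ofReal_toReal hh.ne).symm
  have hF0 : 0 ≤ F := ENNReal.toReal_nonneg
  have hH0 : 0 ≤ H := ENNReal.toReal_nonneg
  obtain ⟨f_bdd, f_holder⟩ := bounds_of_unifNorm_le hF0 hF.le
  obtain ⟨h_bdd, h_ring⟩ := bounds_of_ringNorm_le hH0 hH.le
  have fh_bdd : ∀ x ∈ D, |f x * h x| ≤ H * F := fun x hx => by
    rw [abs_mul, mul_comm H]
    exact mul_le_mul (f_bdd x hx) (h_bdd x hx) (abs_nonneg _) hF0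
  have fh_holder : ∀ x ∈ D, ∀ y ∈ D, x ≠ y →
      |f x * h x - f y * h y| ≤ 3 * H * F * ‖x - y‖ ^ α := fun x hx y hy hxy =>
    abs_mul_sub_mul_le hF0 (abs_le_mul_rpow_norm_of_map_zero hF0 hD hf0 f_holder hx)
      (f_holder x hx y hy hxy) (h_bdd y hy)
      (rpow_norm_mul_abs_sub_le hα0.le hα1 (h_bdd y hy) (h_ring x hx y hy hxy))
  calc unifNorm α D (fun x => f x * h x)
      ≤ ENNReal.ofReal (H * F + 3 * H * F) :=
        unifNorm_le_ofReal_add (by positivity) (by positivity) fh_bdd fh_holder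
    _ = ENNReal.ofReal 4 * ringNorm α D h * unifNorm α D f := by
        rw [hF, hH, ← ENNReal.ofReal_mul (by norm_num), ← ENNReal.ofReal_mul (by positivity)]
        ring_nf
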